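/- Let M ∈ ℕ with M ≥ 1, let α, β > 0, let t ∈ ℝ, and let U : ℝ → ℝ^{n×k}, ξ : ℝ → ℝ^{k×k}, W : ℝ → ℝ^{k×k} be M-times continuously differentiable matrix-valued functions. Assume that for all orders 0 ≤ m ≤ M: ‖U^{(m)}(t)‖_F ≤ β ‖ξ^{(m)}(t)‖_F, ‖W^{(m)}(t)‖_F ≤ β ‖ξ^{(m)}(t)‖_F, and ‖ξ^{(m)}(t)‖_F ≤ α^m ‖ξ(t)‖_F^m. Let Δ(t) = U(t) ξ(t) W(t)ᵀ. Then ‖Δ^{(M)}(t)‖_F ≤ β² (3α)^M ‖ξ(t)‖_F^M. -/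

import Mathlib

open Matrix Finset

attribute [local instance] Matrix.frobeniusSeminormedAddCommGroup Matrix.frobeniusNormedSpace

/-- The Frobenius norm of a real matrix. -/
noncomputable def frobNorm {m n : ℕ} (A : Matrix (Fin m) (Fin n) ℝ) : ℝ :=
  Real.sqrt (∑ i, ∑ j, A i j ^ 2)

lemma frobNorm_eq_norm {m n : ℕ} (A : Matrix (Fin m) (Fin n) ℝ) : frobNorm A = ‖A‖ := by
  rw [frobNorm, Matrix.frobenius_norm_def, ← Real.sqrt_eq_rpow]
  congr 1
  refine Finset.sum_congr rfl fun i _ => Finset.sum_congr rfl fun j _ => ?_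
  rw [Real.rpow_two, Real.norm_eq_abs, sq_abs]

lemma myIteratedDeriv_add {n : ℕ} {f g : ℝ → ℝ} (hf : ContDiff ℝ n f) (hg : ContDiff ℝ n g)
    (t : ℝ) :
    iteratedDeriv n (fun s => f s + g s) t = iteratedDeriv n f t + iteratedDeriv n g t := by
  simp only [iteratedDeriv_eq_iteratedFDeriv]
  rw [show (fun s => f s + g s) = f + g from rfl, iteratedFDeriv_add_apply hf.contDiffAt hg.contDiffAt]
  rfl

lemma myIteratedDeriv_sum {ι : Type*} (s : Finset ι) {F : ι → ℝ → ℝ} {n : ℕ}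
    (h : ∀ i ∈ s, ContDiff ℝ n (F i)) (t : ℝ) :
    iteratedDeriv n (fun x => ∑ i ∈ s, F i x) t = ∑ i ∈ s, iteratedDeriv n (F i) t := by
  classical
  induction s using Finset.induction_on with
  | empty => simp [iteratedDeriv_eq_iteratedFDeriv, iteratedFDeriv_zero_fun]
  | @insert a s' hx ih =>
    simp only [Finset.sum_insert hx]
    rw [myIteratedDeriv_add (h a (Finset.mem_insert_self a s'))
      (ContDiff.sum fun i hi => h i (Finset.mem_insert_of_mem hi)),
      ih fun i hi => h i (Finset.mem_insert_of_mem hi)]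

lemma choose_sum_aux (n : ℕ) (a b : ℕ → ℝ) :
    ∑ i ∈ range (n + 1), (n.choose i : ℝ) * (a (i + 1) * b (n - i) + a i * b (n - i + 1))
      = ∑ i ∈ range (n + 2), ((n + 1).choose i : ℝ) * (a i * b (n + 1 - i)) := by
  have key : ∑ i ∈ range (n + 1), (n.choose i : ℝ) * (a i * b (n - i + 1))
      = (∑ i ∈ range (n + 1), (n.choose (i + 1) : ℝ) * (a (i + 1) * b (n - i)))
          + a 0 * b (n + 1) := by
    rw [Finset.sum_range_succ' (fun i => (n.choose i : ℝ) * (a i * b (n - i + 1))),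
      Finset.sum_range_succ (fun i => (n.choose (i + 1) : ℝ) * (a (i + 1) * b (n - i)))]
    simp only [Nat.choose_zero_right, Nat.cast_one, one_mul, Nat.sub_zero,
      Nat.choose_succ_self, Nat.cast_zero, zero_mul, add_zero]
    congr 1
    refine Finset.sum_congr rfl fun i hi => ?_
    have : n - (i + 1) + 1 = n - i := by
      have := Finset.mem_range.mp hi; omega
    rw [this]
  rw [Finset.sum_range_succ' (fun i => ((n + 1).choose i : ℝ) * (a i * b (n + 1 - i)))]
  simp only [mul_add, Finset.sum_add_distrib, Nat.choose_succ_succ, Nat.succ_sub_succ,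
    Nat.cast_add, add_mul, Nat.choose_zero_right, Nat.cast_one, one_mul, Nat.sub_zero]
  rw [key]
  ring

lemma myIteratedDeriv_mul : ∀ (n : ℕ) (f g : ℝ → ℝ), ContDiff ℝ n f → ContDiff ℝ n g → ∀ t : ℝ,
    iteratedDeriv n (fun s => f s * g s) t
      = ∑ i ∈ range (n + 1),
          (n.choose i : ℝ) * (iteratedDeriv i f t * iteratedDeriv (n - i) g t) := by
  intro n
  induction n with
  | zero => intro f g _ _ t; simp
  | succ n ih =>
    intro f g hf hg t
    have hIH : iteratedDeriv n (fun s => f s * g s)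
        = fun t => ∑ i ∈ range (n + 1),
            (n.choose i : ℝ) * (iteratedDeriv i f t * iteratedDeriv (n - i) g t) :=
      funext fun t => ih f g hf.of_succ hg.of_succ t
    have hdf : ∀ m, m ≤ n → ∀ x : ℝ, DifferentiableAt ℝ (iteratedDeriv m f) x := fun m hm x =>
      (hf.differentiable_iteratedDeriv m (by exact_mod_cast Nat.lt_succ_of_le hm)).differentiableAt
    have hdg : ∀ m, m ≤ n → ∀ x : ℝ, DifferentiableAt ℝ (iteratedDeriv m g) x := fun m hm x =>
      (hg.differentiable_iteratedDeriv m (by exact_mod_cast Nat.lt_succ_of_le hm)).differentiableAt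
    rw [iteratedDeriv_succ, hIH]
    rw [deriv_fun_sum (fun i hi => by
      have hi' : i ≤ n := Nat.lt_succ_iff.mp (Finset.mem_range.mp hi)
      exact (((hdf i hi' t).mul (hdg (n - i) (Nat.sub_le n i) t)).const_mul _))]
    have hterm : ∀ i ∈ range (n + 1),
        deriv (fun x => (n.choose i : ℝ) *
            (iteratedDeriv i f x * iteratedDeriv (n - i) g x)) t
          = (n.choose i : ℝ) * (iteratedDeriv (i + 1) f t * iteratedDeriv (n - i) g t
              + iteratedDeriv i f t * iteratedDeriv (n - i + 1) g t) := by
      intro i hi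
      have hi' : i ≤ n := Nat.lt_succ_iff.mp (Finset.mem_range.mp hi)
      rw [deriv_const_mul (d := fun x => iteratedDeriv i f x * iteratedDeriv (n - i) g x) _ ((hdf i hi' t).mul (hdg (n - i) (Nat.sub_le n i) t)),
        deriv_fun_mul (hdf i hi' t) (hdg (n - i) (Nat.sub_le n i) t),
        iteratedDeriv_succ, iteratedDeriv_succ]
    rw [Finset.sum_congr rfl hterm]
    exact choose_sum_aux n (fun i => iteratedDeriv i f t) (fun i => iteratedDeriv i g t)

lemma contDiff_mul_entry {a b c : ℕ} {A : ℝ → Matrix (Fin a) (Fin b) ℝ}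
    {B : ℝ → Matrix (Fin b) (Fin c) ℝ} {n : ℕ}
    (hA : ∀ i j, ContDiff ℝ n (fun s => A s i j)) (hB : ∀ i j, ContDiff ℝ n (fun s => B s i j))
    (i : Fin a) (j : Fin c) : ContDiff ℝ n (fun s => (A s * B s) i j) := by
  simp only [Matrix.mul_apply]
  exact ContDiff.sum fun x _ => (hA i x).mul (hB x j)

lemma matrix_leibniz {a b c : ℕ} (A : ℝ → Matrix (Fin a) (Fin b) ℝ)
    (B : ℝ → Matrix (Fin b) (Fin c) ℝ) {n : ℕ}
    (hA : ∀ i j, ContDiff ℝ n (fun s => A s i j)) (hB : ∀ i j, ContDiff ℝ n (fun s => B s i j))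
    (t : ℝ) :
    (Matrix.of fun i j => iteratedDeriv n (fun s => (A s * B s) i j) t)
      = ∑ m ∈ range (n + 1), (n.choose m : ℝ) •
          ((Matrix.of fun i j => iteratedDeriv m (fun s => A s i j) t) *
           (Matrix.of fun i j => iteratedDeriv (n - m) (fun s => B s i j) t)) := by
  ext i j
  simp only [Matrix.mul_apply, Matrix.of_apply, Finset.sum_apply, Matrix.smul_apply,
    smul_eq_mul, Finset.mul_sum]
  rw [myIteratedDeriv_sum _ (fun x _ => (hA i x).mul (hB x j)) t]
  rw [Finset.sum_congr rfl fun x _ => myIteratedDeriv_mul n _ _ (hA i x) (hB x j) t]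
  rw [Finset.sum_comm]
  simp [Matrix.sum_apply, Matrix.mul_apply, Finset.mul_sum, mul_assoc]

/-- Bound on the `M`-th derivative of `Δ(t) = U(t) ξ(t) W(t)ᵀ` under the assumptions
`‖U^{(m)}(t)‖_F ≤ β ‖ξ^{(m)}(t)‖_F`, `‖W^{(m)}(t)‖_F ≤ β ‖ξ^{(m)}(t)‖_F`, and
`‖ξ^{(m)}(t)‖_F ≤ α^m ‖ξ(t)‖_F^m` for all `0 ≤ m ≤ M`:
then `‖Δ^{(M)}(t)‖_F ≤ β² (3α)^M ‖ξ(t)‖_F^M`. -/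
theorem frobNorm_iteratedDeriv_svd_product_le
    (n k M : ℕ) (hM : 1 ≤ M) (α β : ℝ) (hα : 0 < α) (hβ : 0 < β) (t : ℝ)
    (U : ℝ → Matrix (Fin n) (Fin k) ℝ)
    (ξ : ℝ → Matrix (Fin k) (Fin k) ℝ)
    (W : ℝ → Matrix (Fin k) (Fin k) ℝ)
    (hU : ∀ i j, ContDiff ℝ M (fun s => U s i j))
    (hξ : ∀ i j, ContDiff ℝ M (fun s => ξ s i j))
    (hW : ∀ i j, ContDiff ℝ M (fun s => W s i j))
    (hUb : ∀ m ≤ M,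
      frobNorm (Matrix.of fun i j => iteratedDeriv m (fun s => U s i j) t)
        ≤ β * frobNorm (Matrix.of fun i j => iteratedDeriv m (fun s => ξ s i j) t))
    (hWb : ∀ m ≤ M,
      frobNorm (Matrix.of fun i j => iteratedDeriv m (fun s => W s i j) t)
        ≤ β * frobNorm (Matrix.of fun i j => iteratedDeriv m (fun s => ξ s i j) t))
    (hξb : ∀ m ≤ M,
      frobNorm (Matrix.of fun i j => iteratedDeriv m (fun s => ξ s i j) t)
        ≤ α ^ m * frobNorm (ξ t) ^ m) :
    frobNorm (Matrix.of fun i j =>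
        iteratedDeriv M (fun s => (U s * ξ s * (W s)ᵀ) i j) t)
      ≤ β ^ 2 * (3 * α) ^ M * frobNorm (ξ t) ^ M := by
  classical
  set X : ℝ := frobNorm (ξ t) with hXdef
  have hXnn : 0 ≤ X := Real.sqrt_nonneg _
  set DU : ℕ → Matrix (Fin n) (Fin k) ℝ :=
    fun m => Matrix.of fun i j => iteratedDeriv m (fun s => U s i j) t with hDU
  set Dξ : ℕ → Matrix (Fin k) (Fin k) ℝ :=
    fun m => Matrix.of fun i j => iteratedDeriv m (fun s => ξ s i j) t with hDξ
  set DW : ℕ → Matrix (Fin k) (Fin k) ℝ :=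
    fun m => Matrix.of fun i j => iteratedDeriv m (fun s => W s i j) t with hDW
  -- bounds in norm form
  have hξb' : ∀ m ≤ M, ‖Dξ m‖ ≤ α ^ m * X ^ m := fun m hm => by
    have := hξb m hm; rwa [frobNorm_eq_norm] at this
  have hUb' : ∀ m ≤ M, ‖DU m‖ ≤ β * (α ^ m * X ^ m) := fun m hm => by
    have h1 := hUb m hm; rw [frobNorm_eq_norm, frobNorm_eq_norm] at h1
    exact h1.trans (mul_le_mul_of_nonneg_left (hξb' m hm) hβ.le)
  have hWb' : ∀ m ≤ M, ‖DW m‖ ≤ β * (α ^ m * X ^ m) := fun m hm => by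
    have h1 := hWb m hm; rw [frobNorm_eq_norm, frobNorm_eq_norm] at h1
    exact h1.trans (mul_le_mul_of_nonneg_left (hξb' m hm) hβ.le)
  have hUξ : ∀ i j, ContDiff ℝ M (fun s => (U s * ξ s) i j) := contDiff_mul_entry hU hξ
  have hWT : ∀ (i j : Fin k), ContDiff ℝ M (fun s => (W s)ᵀ i j) := fun i j => hW j i
  have h1 := matrix_leibniz (fun s => U s * ξ s) (fun s => (W s)ᵀ) hUξ hWT t
  have hWTeq : ∀ q : ℕ,
      (Matrix.of fun i j => iteratedDeriv q (fun s => (W s)ᵀ i j) t) = (DW q)ᵀ := by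
    intro q; ext i j; rfl
  -- second-level Leibniz
  have h2 : ∀ m ≤ M,
      (Matrix.of fun i j => iteratedDeriv m (fun s => (U s * ξ s) i j) t)
        = ∑ l ∈ range (m + 1), (m.choose l : ℝ) • (DU l * Dξ (m - l)) := by
    intro m hm
    exact matrix_leibniz U ξ
      (fun i j => (hU i j).of_le (by exact_mod_cast hm))
      (fun i j => (hξ i j).of_le (by exact_mod_cast hm)) t
  have hDA : ∀ m ≤ M,
      ‖(Matrix.of fun i j => iteratedDeriv m (fun s => (U s * ξ s) i j) t)‖
        ≤ (2 : ℝ) ^ m * (β * (α ^ m * X ^ m)) := by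
    intro m hm
    rw [h2 m hm]
    calc ‖∑ l ∈ range (m + 1), (m.choose l : ℝ) • (DU l * Dξ (m - l))‖
        ≤ ∑ l ∈ range (m + 1), ‖(m.choose l : ℝ) • (DU l * Dξ (m - l))‖ := norm_sum_le _ _
      _ ≤ ∑ l ∈ range (m + 1), (m.choose l : ℝ) * (β * (α ^ m * X ^ m)) := by
          refine Finset.sum_le_sum fun l hl => ?_
          have hl' : l ≤ m := Nat.lt_succ_iff.mp (Finset.mem_range.mp hl)
          rw [norm_smul, Real.norm_natCast]
          refine mul_le_mul_of_nonneg_left ?_ (Nat.cast_nonneg _)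
          have e : α ^ l * X ^ l * (α ^ (m - l) * X ^ (m - l)) = α ^ m * X ^ m := by
            rw [show α ^ l * X ^ l * (α ^ (m - l) * X ^ (m - l))
                = (α ^ l * α ^ (m - l)) * (X ^ l * X ^ (m - l)) from by ring,
              ← pow_add, ← pow_add, Nat.add_sub_cancel' hl']
          calc ‖DU l * Dξ (m - l)‖ ≤ ‖DU l‖ * ‖Dξ (m - l)‖ := Matrix.frobenius_norm_mul _ _
            _ ≤ (β * (α ^ l * X ^ l)) * (α ^ (m - l) * X ^ (m - l)) :=
                mul_le_mul (hUb' l (le_trans hl' hm))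
                  (hξb' (m - l) (le_trans (Nat.sub_le m l) hm)) (norm_nonneg _)
                  (mul_nonneg hβ.le (mul_nonneg (pow_nonneg hα.le _) (pow_nonneg hXnn _)))
            _ = β * (α ^ l * X ^ l * (α ^ (m - l) * X ^ (m - l))) := by ring
            _ = β * (α ^ m * X ^ m) := by rw [e]
      _ = (2 : ℝ) ^ m * (β * (α ^ m * X ^ m)) := by
          rw [← Finset.sum_mul]
          congr 1
          have := Nat.sum_range_choose m
          exact_mod_cast congrArg (Nat.cast : ℕ → ℝ) this
  -- main estimate
  rw [frobNorm_eq_norm]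
  have key : ‖(Matrix.of fun i j =>
        iteratedDeriv M (fun s => (U s * ξ s * (W s)ᵀ) i j) t)‖
      ≤ ∑ m ∈ range (M + 1), (M.choose m : ℝ) * ((2 : ℝ) ^ m * (β ^ 2 * (α ^ M * X ^ M))) := by
    rw [h1]
    calc ‖∑ m ∈ range (M + 1), (M.choose m : ℝ) •
            ((Matrix.of fun i j => iteratedDeriv m (fun s => (U s * ξ s) i j) t) *
             (Matrix.of fun i j => iteratedDeriv (M - m) (fun s => (W s)ᵀ i j) t))‖
        ≤ ∑ m ∈ range (M + 1), ‖(M.choose m : ℝ) •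
            ((Matrix.of fun i j => iteratedDeriv m (fun s => (U s * ξ s) i j) t) *
             (Matrix.of fun i j => iteratedDeriv (M - m) (fun s => (W s)ᵀ i j) t))‖ :=
          norm_sum_le _ _
      _ ≤ ∑ m ∈ range (M + 1), (M.choose m : ℝ) *
            ((2 : ℝ) ^ m * (β ^ 2 * (α ^ M * X ^ M))) := by
          refine Finset.sum_le_sum fun m hm => ?_
          have hm' : m ≤ M := Nat.lt_succ_iff.mp (Finset.mem_range.mp hm)
          rw [norm_smul, Real.norm_natCast, hWTeq]
          refine mul_le_mul_of_nonneg_left ?_ (Nat.cast_nonneg _)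
          have e : α ^ m * X ^ m * (α ^ (M - m) * X ^ (M - m)) = α ^ M * X ^ M := by
            rw [show α ^ m * X ^ m * (α ^ (M - m) * X ^ (M - m))
                = (α ^ m * α ^ (M - m)) * (X ^ m * X ^ (M - m)) from by ring,
              ← pow_add, ← pow_add, Nat.add_sub_cancel' hm']
          calc ‖(Matrix.of fun i j => iteratedDeriv m (fun s => (U s * ξ s) i j) t) * (DW (M - m))ᵀ‖
              ≤ ‖(Matrix.of fun i j => iteratedDeriv m (fun s => (U s * ξ s) i j) t)‖ *
                  ‖(DW (M - m))ᵀ‖ := Matrix.frobenius_norm_mul _ _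
            _ = ‖(Matrix.of fun i j => iteratedDeriv m (fun s => (U s * ξ s) i j) t)‖ *
                  ‖DW (M - m)‖ := by rw [Matrix.frobenius_norm_transpose]
            _ ≤ ((2 : ℝ) ^ m * (β * (α ^ m * X ^ m))) * (β * (α ^ (M - m) * X ^ (M - m))) :=
                mul_le_mul (hDA m hm') (hWb' (M - m) (Nat.sub_le M m)) (norm_nonneg _)
                  (mul_nonneg (pow_nonneg two_pos.le _)
                    (mul_nonneg hβ.le (mul_nonneg (pow_nonneg hα.le _) (pow_nonneg hXnn _))))
            _ = (2 : ℝ) ^ m * (β ^ 2 * (α ^ m * X ^ m * (α ^ (M - m) * X ^ (M - m)))) := by ring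
            _ = (2 : ℝ) ^ m * (β ^ 2 * (α ^ M * X ^ M)) := by rw [e]
  refine key.trans (le_of_eq ?_)
  have h3 : ∑ m ∈ range (M + 1), (M.choose m : ℝ) * (2 : ℝ) ^ m = (3 : ℝ) ^ M := by
    have hnat : ∑ m ∈ range (M + 1), M.choose m * 2 ^ m = 3 ^ M := by
      have := (add_pow 2 1 M).symm
      simpa [mul_comm] using this
    exact_mod_cast congrArg (Nat.cast : ℕ → ℝ) hnat
  calc ∑ m ∈ range (M + 1), (M.choose m : ℝ) * ((2 : ℝ) ^ m * (β ^ 2 * (α ^ M * X ^ M)))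
      = (∑ m ∈ range (M + 1), (M.choose m : ℝ) * (2 : ℝ) ^ m) * (β ^ 2 * (α ^ M * X ^ M)) := by
        rw [Finset.sum_mul]; exact Finset.sum_congr rfl fun m _ => by ring
    _ = (3 : ℝ) ^ M * (β ^ 2 * (α ^ M * X ^ M)) := by rw [h3]
    _ = β ^ 2 * (3 * α) ^ M * X ^ M := by rw [mul_pow]; ring
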